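/- Let A ∈ ℝ^{d×d} be power bounded, i.e., sup_{k ∈ ℕ} ‖A^k‖ < ∞ (equivalently, the discrete-time linear system x(t+1) = A x(t) is Lyapunov stable, i.e., all of its solutions are bounded). Then there exists a symmetric positive definite matrix P ∈ ℝ^{d×d} such that ⟨P (A x), A x⟩ ≤ ⟨P x, x⟩ for all x ∈ ℝ^d. -/

import Mathlib

/-!
Let `‖fᵏ‖ ≤ C` for all `k`. The powers of `f` lie in a compact ball, so their cluster points form
a compact semigroup, which contains an idempotent `e` (Ellis). Since `e` is a cluster point of
`fⁿ`, some power `fⁿ` is a contraction on the range of `1 - e`, and the finite Gramian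
`∑_{k<n} ‖fᵏ (1 - e) x‖²` does not increase along `f`. On the range of `e` we have
`‖x‖ ≤ C ‖fᵏ x‖` for every `k`, so a cluster point `Q` of the Cesàro means `N⁻¹ ∑_{k<N} (fᵏ)⋆ fᵏ`,
which satisfies `f⋆ Q f = Q`, is positive there. The sum of the two forms is positive definite and
does not increase along `f`.
-/

noncomputable def euclideanOpNorm {d : ℕ} (M : Matrix (Fin d) (Fin d) ℝ) : ℝ :=
  ‖LinearMap.toContinuousLinearMap (Matrix.toEuclideanLin M)‖

open Filter Topology Finset
open scoped RealInnerProductSpace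

section Monoid

variable {M : Type*} [Monoid M] [TopologicalSpace M] {f e : M}

theorem MapClusterPt.commute_of_pow [T2Space M] [ContinuousMul M]
    (he : MapClusterPt e atTop (f ^ ·)) : Commute e f :=
  (isClosed_eq (continuous_mul_const f) (continuous_const_mul f)).mem_of_mapClusterPt he
    (Eventually.of_forall fun n => (Commute.self_pow f n).symm.eq)

theorem MapClusterPt.mul_of_pow [ContinuousMul M] {x y : M}
    (hx : MapClusterPt x atTop (f ^ ·)) (hy : MapClusterPt y atTop (f ^ ·)) :
    MapClusterPt (x * y) atTop (f ^ ·) := by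
  have hxf : ∀ m : ℕ, MapClusterPt (x * f ^ m) atTop (f ^ ·) := fun m =>
    .of_comp (tendsto_add_atTop_nat m) <| by
      simpa [Function.comp_def, pow_add] using
        hx.continuousAt_comp (continuous_mul_const (f ^ m)).continuousAt
  exact isClosed_setOfPred_clusterPt.mem_of_mapClusterPt
    (hy.continuousAt_comp (continuous_const_mul x).continuousAt) (Eventually.of_forall hxf)

theorem exists_isIdempotentElem_mapClusterPt_pow [T2Space M] [ContinuousMul M] {K : Set M}
    (hK : IsCompact K) (hfK : ∀ n : ℕ, f ^ n ∈ K) :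
    ∃ e, IsIdempotentElem e ∧ MapClusterPt e atTop (f ^ ·) := by
  set Ω := {e | MapClusterPt e atTop (f ^ ·)}
  have hΩK : Ω ⊆ K := fun e he =>
    hK.isClosed.mem_of_mapClusterPt he (Eventually.of_forall hfK)
  obtain ⟨e₀, -, he₀⟩ := hK.exists_mapClusterPt (u := (f ^ ·)) (f := atTop)
    (tendsto_principal.2 (Eventually.of_forall hfK))
  obtain ⟨e, he, hee⟩ := exists_idempotent_in_compact_subsemigroup continuous_mul_const Ω
    ⟨e₀, he₀⟩ (hK.of_isClosed_subset isClosed_setOfPred_clusterPt hΩK)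
    fun _ hx _ hy => hx.mul_of_pow hy
  exact ⟨e, hee, he⟩

end Monoid

theorem MapClusterPt.pow_mul_one_sub {R : Type*} [Ring R] [TopologicalSpace R] [ContinuousMul R]
    {f e : R} (he : MapClusterPt e atTop (f ^ ·)) (hee : IsIdempotentElem e) :
    MapClusterPt 0 atTop (fun n : ℕ => f ^ n * (1 - e)) := by
  simpa [Function.comp_def, hee.mul_one_sub_self] using
    he.continuousAt_comp (continuous_mul_const (1 - e)).continuousAt

theorem ContinuousLinearMap.norm_le_mul_norm_pow_apply_of_mapClusterPt {𝕜 E : Type*}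
    [NontriviallyNormedField 𝕜] [NormedAddCommGroup E] [NormedSpace 𝕜 E] {f e : E →L[𝕜] E}
    {C : ℝ} (hC : ∀ k : ℕ, ‖f ^ k‖ ≤ C) (he : MapClusterPt e atTop (f ^ ·)) {x : E}
    (hx : e x = x) (k : ℕ) : ‖x‖ ≤ C * ‖(f ^ k) x‖ := by
  have hex : MapClusterPt x atTop (fun n : ℕ => (f ^ n) x) := by
    simpa [Function.comp_def, hx] using he.continuousAt_comp (apply 𝕜 E x).continuous.continuousAt
  have hbound : ∀ n ≥ k, ‖(f ^ n) x‖ ≤ C * ‖(f ^ k) x‖ := fun n hn => by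
    rw [← Nat.sub_add_cancel hn, pow_add, mul_apply_eq_comp]
    exact (le_opNorm _ _).trans (mul_le_mul_of_nonneg_right (hC _) (norm_nonneg _))
  simpa using (isClosed_le continuous_norm continuous_const).mem_of_mapClusterPt hex
    (eventually_atTop.2 ⟨k, hbound⟩)

section StarRing

variable {R : Type*}

def powGramian [Semiring R] [StarRing R] (f : R) (N : ℕ) : R :=
  ∑ k ∈ range N, star (f ^ k) * f ^ k

theorem isSelfAdjoint_powGramian [Semiring R] [StarRing R] (f : R) (N : ℕ) :
    IsSelfAdjoint (powGramian f N) :=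
  isSelfAdjoint_sum _ fun _ _ => .star_mul_self _

theorem star_mul_powGramian_mul [Ring R] [StarRing R] (f : R) (N : ℕ) :
    star f * powGramian f N * f = powGramian f N + (star (f ^ N) * f ^ N - 1) := by
  have hshift : star f * powGramian f N * f = ∑ k ∈ range N, star (f ^ (k + 1)) * f ^ (k + 1) := by
    simp only [powGramian, mul_sum, sum_mul, pow_succ, star_mul, mul_assoc]
  have htelescope := sum_range_sub (fun k => star (f ^ k) * f ^ k) N
  simp only [sum_sub_distrib, pow_zero, star_one, mul_one] at htelescope
  rw [hshift, powGramian, ← htelescope]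
  abel

end StarRing

section CStarRing

variable {R : Type*} [NormedRing R] [StarRing R] [CStarRing R] {f Q : R} {C : ℝ}

theorem norm_star_pow_mul_pow_le (hC : ∀ k : ℕ, ‖f ^ k‖ ≤ C) (k : ℕ) :
    ‖star (f ^ k) * f ^ k‖ ≤ C ^ 2 := by
  rw [CStarRing.norm_star_mul_self, ← sq]
  exact pow_le_pow_left₀ (norm_nonneg _) (hC k) 2

theorem norm_inv_smul_powGramian_le [NormedAlgebra ℝ R] (hC : ∀ k : ℕ, ‖f ^ k‖ ≤ C) (N : ℕ) :
    ‖(N : ℝ)⁻¹ • powGramian f N‖ ≤ C ^ 2 := by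
  rcases N.eq_zero_or_pos with rfl | hN
  · simpa [powGramian] using sq_nonneg C
  calc ‖(N : ℝ)⁻¹ • powGramian f N‖ ≤ (N : ℝ)⁻¹ * ∑ k ∈ range N, ‖star (f ^ k) * f ^ k‖ := by
        rw [norm_smul, norm_inv, Real.norm_natCast]
        gcongr
        exact norm_sum_le _ _
    _ ≤ (N : ℝ)⁻¹ * (N * C ^ 2) := by
        gcongr
        simpa using sum_le_card_nsmul (range N) _ _ fun k _ => norm_star_pow_mul_pow_le hC k
    _ = C ^ 2 := by field_simp

theorem MapClusterPt.star_mul_mul_eq_of_powGramian [NormedAlgebra ℝ R]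
    (hC : ∀ k : ℕ, ‖f ^ k‖ ≤ C)
    (hQ : MapClusterPt Q atTop fun N : ℕ => (N : ℝ)⁻¹ • powGramian f N) : star f * Q * f = Q := by
  set Φ : R → R := fun B => star f * B * f - B
  have hΦ : ∀ N : ℕ, Φ ((N : ℝ)⁻¹ • powGramian f N) = (N : ℝ)⁻¹ • (star (f ^ N) * f ^ N - 1) := by
    intro N
    simp only [Φ, mul_smul_comm, smul_mul_assoc, star_mul_powGramian_mul, ← smul_sub,
      add_sub_cancel_left]
  have hΦlim : Tendsto (fun N : ℕ => Φ ((N : ℝ)⁻¹ • powGramian f N)) atTop (𝓝 0) := by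
    simp only [hΦ]
    refine squeeze_zero_norm (fun N => ?_) (by simpa using
      (tendsto_inv_atTop_zero.comp tendsto_natCast_atTop_atTop).mul_const (C ^ 2 + ‖(1 : R)‖))
    rw [norm_smul, norm_inv, Real.norm_natCast]
    gcongr
    exact (norm_sub_le _ _).trans (add_le_add_left (norm_star_pow_mul_pow_le hC N) _)
  have hΦQ : ClusterPt (Φ Q) (𝓝 0) :=
    (hQ.continuousAt_comp (by fun_prop : Continuous Φ).continuousAt).clusterPt.mono hΦlim
  exact sub_eq_zero.1 (eq_of_nhds_neBot hΦQ)

theorem MapClusterPt.isSelfAdjoint_of_powGramian [NormedAlgebra ℝ R] [StarModule ℝ R]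
    (hQ : MapClusterPt Q atTop fun N : ℕ => (N : ℝ)⁻¹ • powGramian f N) : IsSelfAdjoint Q :=
  (isClosed_eq continuous_star continuous_id).mem_of_mapClusterPt hQ
    (Eventually.of_forall fun N => (IsSelfAdjoint.all _).smul (isSelfAdjoint_powGramian f N))

end CStarRing

section InnerProductSpace

variable {E : Type*} [NormedAddCommGroup E] [InnerProductSpace ℝ E]

namespace ContinuousLinearMap

variable [CompleteSpace E]

theorem inner_star_mul_mul_apply_self (A B : E →L[ℝ] E) (x : E) :
    ⟪(star A * B * A) x, x⟫ = ⟪B (A x), A x⟫ := by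
  rw [mul_apply_eq_comp, mul_apply_eq_comp, star_eq_adjoint, adjoint_inner_left]

theorem inner_star_mul_self_apply_self (A : E →L[ℝ] E) (x : E) :
    ⟪(star A * A) x, x⟫ = ‖A x‖ ^ 2 := by
  rw [mul_apply_eq_comp, star_eq_adjoint, adjoint_inner_left, real_inner_self_eq_norm_sq]

theorem inner_powGramian_apply_self (f : E →L[ℝ] E) (N : ℕ) (x : E) :
    ⟪powGramian f N x, x⟫ = ∑ k ∈ range N, ‖(f ^ k) x‖ ^ 2 := by
  simp only [powGramian, _root_.sum_apply, sum_inner, inner_star_mul_self_apply_self]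

theorem inner_powGramian_apply_apply_self (f : E →L[ℝ] E) (N : ℕ) (x : E) :
    ⟪powGramian f N (f x), f x⟫ = ⟪powGramian f N x, x⟫ + (‖(f ^ N) x‖ ^ 2 - ‖x‖ ^ 2) := by
  rw [← inner_star_mul_mul_apply_self, star_mul_powGramian_mul, add_apply, inner_add_left,
    sub_apply, inner_sub_left, inner_star_mul_self_apply_self, one_apply_eq_self,
    real_inner_self_eq_norm_sq]

theorem norm_sq_le_inner_powGramian_apply_self (f : E →L[ℝ] E) {N : ℕ} (hN : 0 < N) (x : E) :
    ‖x‖ ^ 2 ≤ ⟪powGramian f N x, x⟫ := by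
  rw [inner_powGramian_apply_self]
  simpa using single_le_sum (fun k _ => sq_nonneg ‖(f ^ k) x‖) (mem_range.2 hN)

end ContinuousLinearMap

open ContinuousLinearMap

variable {f : E →L[ℝ] E} {C : ℝ}

theorem MapClusterPt.le_inner_of_powGramian [CompleteSpace E] {Q : E →L[ℝ] E}
    (hQ : MapClusterPt Q atTop fun N : ℕ => (N : ℝ)⁻¹ • powGramian f N) {x : E} {r : ℝ}
    (hr : ∀ k : ℕ, r ≤ ‖(f ^ k) x‖ ^ 2) : r ≤ ⟪Q x, x⟫ := by
  have hclosed : IsClosed {B : E →L[ℝ] E | r ≤ ⟪B x, x⟫} :=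
    isClosed_le continuous_const ((continuous_id.clm_apply continuous_const).inner continuous_const)
  refine hclosed.mem_of_mapClusterPt hQ (eventually_atTop.2 ⟨1, fun N hN => ?_⟩)
  have hN : (0 : ℝ) < N := by exact_mod_cast hN
  calc r = (N : ℝ)⁻¹ * ∑ _k ∈ range N, r := by simp [field]
    _ ≤ (N : ℝ)⁻¹ * ∑ k ∈ range N, ‖(f ^ k) x‖ ^ 2 := by gcongr with k; exact hr k
    _ = ⟪((N : ℝ)⁻¹ • powGramian f N) x, x⟫ := by
        rw [smul_apply, real_inner_smul_left, inner_powGramian_apply_self]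

theorem exists_isSelfAdjoint_invariant_form_of_norm_pow_le [FiniteDimensional ℝ E]
    (hC : ∀ k : ℕ, ‖f ^ k‖ ≤ C) :
    ∃ Q : E →L[ℝ] E, IsSelfAdjoint Q ∧ (∀ x, ⟪Q (f x), f x⟫ = ⟪Q x, x⟫) ∧
      ∀ x r, (∀ k : ℕ, r ≤ ‖(f ^ k) x‖ ^ 2) → r ≤ ⟪Q x, x⟫ := by
  obtain ⟨Q, -, hQ⟩ := (isCompact_closedBall (0 : E →L[ℝ] E) (C ^ 2)).exists_mapClusterPt
    (f := atTop) (tendsto_principal.2 (Eventually.of_forall fun N => mem_closedBall_zero_iff.2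
      (norm_inv_smul_powGramian_le hC N)))
  refine ⟨Q, hQ.isSelfAdjoint_of_powGramian, fun x => ?_, fun x r => hQ.le_inner_of_powGramian⟩
  rw [← inner_star_mul_mul_apply_self, hQ.star_mul_mul_eq_of_powGramian hC]

theorem exists_lyapunov_of_commute_of_pow_apply_le [CompleteSpace E] {u : E →L[ℝ] E}
    (hfu : Commute f u) {n : ℕ} (hn : 0 < n) (hcontr : ∀ x, ‖(f ^ n) (u x)‖ ≤ ‖u x‖) :
    ∃ T : E →L[ℝ] E, IsSelfAdjoint T ∧ (∀ x, ‖u x‖ ^ 2 ≤ ⟪T x, x⟫) ∧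
      ∀ x, ⟪T (f x), f x⟫ ≤ ⟪T x, x⟫ := by
  refine ⟨star u * powGramian f n * u, ?_, fun x => ?_, fun x => ?_⟩
  · exact (isSelfAdjoint_powGramian f n).conjugate' u
  · rw [inner_star_mul_mul_apply_self]
    exact norm_sq_le_inner_powGramian_apply_self f hn (u x)
  · have hux : u (f x) = f (u x) := by rw [← mul_apply_eq_comp, ← hfu.eq, mul_apply_eq_comp]
    rw [inner_star_mul_mul_apply_self, inner_star_mul_mul_apply_self, hux,
      inner_powGramian_apply_apply_self]
    nlinarith [hcontr x, norm_nonneg ((f ^ n) (u x))]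

theorem exists_lyapunov_one_sub_of_mapClusterPt [CompleteSpace E] {e : E →L[ℝ] E}
    (hee : IsIdempotentElem e) (he : MapClusterPt e atTop (f ^ ·)) :
    ∃ T : E →L[ℝ] E, IsSelfAdjoint T ∧ (∀ x, ‖(1 - e) x‖ ^ 2 ≤ ⟪T x, x⟫) ∧
      ∀ x, ⟪T (f x), f x⟫ ≤ ⟪T x, x⟫ := by
  obtain ⟨n, hn, hn1⟩ : ∃ n, ‖f ^ n * (1 - e)‖ < 1 ∧ 1 ≤ n :=
    (((he.pow_mul_one_sub hee).frequently (Metric.ball_mem_nhds 0 one_pos)).and_eventually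
      (eventually_ge_atTop 1)).exists.imp fun n hn => ⟨by simpa using hn.1, hn.2⟩
  refine exists_lyapunov_of_commute_of_pow_apply_le
    ((Commute.one_right f).sub_right he.commute_of_pow.symm) hn1 fun x => ?_
  calc ‖(f ^ n) ((1 - e) x)‖ = ‖(f ^ n * (1 - e)) ((1 - e) x)‖ := by
        rw [mul_apply_eq_comp, ← mul_apply_eq_comp (1 - e), hee.one_sub.eq]
    _ ≤ ‖f ^ n * (1 - e)‖ * ‖(1 - e) x‖ := le_opNorm _ _
    _ ≤ ‖(1 - e) x‖ := mul_le_of_le_one_left (norm_nonneg _) hn.le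

theorem exists_lyapunov_of_norm_pow_le [FiniteDimensional ℝ E] (hC : ∀ k : ℕ, ‖f ^ k‖ ≤ C) :
    ∃ S : E →L[ℝ] E, IsSelfAdjoint S ∧ (∀ x ≠ 0, 0 < ⟪S x, x⟫) ∧
      ∀ x, ⟪S (f x), f x⟫ ≤ ⟪S x, x⟫ := by
  obtain ⟨e, hee, he⟩ := exists_isIdempotentElem_mapClusterPt_pow (isCompact_closedBall 0 C)
    fun n => mem_closedBall_zero_iff.2 (hC n)
  obtain ⟨T, hT, hTpos, hTf⟩ := exists_lyapunov_one_sub_of_mapClusterPt hee he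
  obtain ⟨Q, hQ, hQf, hQpos⟩ := exists_isSelfAdjoint_invariant_form_of_norm_pow_le hC
  refine ⟨Q + T, hQ.add hT, fun x hx => ?_, fun x => ?_⟩
  · simp only [add_apply, inner_add_left]
    by_cases hux : (1 - e) x = 0
    · have hex : e x = x := by
        rw [sub_apply, one_apply_eq_self, sub_eq_zero] at hux
        exact hux.symm
      have hle := norm_le_mul_norm_pow_apply_of_mapClusterPt hC he hex
      have hC0 : 0 < C := by
        have := hle 0
        simp only [pow_zero, one_apply_eq_self] at this
        nlinarith [norm_pos_iff.2 hx]
      have hQx : 0 < ⟪Q x, x⟫ := (by positivity : 0 < (‖x‖ / C) ^ 2).trans_le <|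
        hQpos x _ fun k => pow_le_pow_left₀ (by positivity) ((div_le_iff₀' hC0).2 (hle k)) 2
      nlinarith [hTpos x, sq_nonneg ‖(1 - e) x‖]
    · nlinarith [hTpos x, norm_pos_iff.2 hux, hQpos x 0 fun k => sq_nonneg _]
  · simp only [add_apply, inner_add_left, hQf]
    exact add_le_add_right (hTf x) _

end InnerProductSpace

open Matrix

/-- If `A` is power bounded (`sup_k ‖A^k‖ < ∞` in the Euclidean operator norm), then
there is a symmetric positive definite `P` with `⟨P (A x), A x⟩ ≤ ⟨P x, x⟩` for all `x`. -/
theorem power_bounded_lyapunov {d : ℕ} (A : Matrix (Fin d) (Fin d) ℝ)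
    (hA : ∃ C : ℝ, ∀ k : ℕ, euclideanOpNorm (A ^ k) ≤ C) :
    ∃ P : Matrix (Fin d) (Fin d) ℝ, P.PosDef ∧
      ∀ x : Fin d → ℝ,
        P.mulVec (A.mulVec x) ⬝ᵥ A.mulVec x ≤ P.mulVec x ⬝ᵥ x := by
  obtain ⟨C, hC⟩ := hA
  let φ := toEuclideanCLM (𝕜 := ℝ) (n := Fin d)
  obtain ⟨S, hS, hSpos, hSf⟩ := exists_lyapunov_of_norm_pow_le (f := φ A) (C := C)
    fun k => map_pow φ A k ▸ hC k
  set P := φ.symm S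
  have hquad : ∀ x : Fin d → ℝ, P *ᵥ x ⬝ᵥ x = ⟪S (WithLp.toLp 2 x), WithLp.toLp 2 x⟫ := fun x => by
    rw [← φ.apply_symm_apply S, real_inner_comm, inner_toEuclideanCLM, dotProduct_comm]
  refine ⟨P, .of_dotProduct_mulVec_pos ?_ fun x hx => ?_, fun x => ?_⟩
  · exact (φ.symm.map_star' S).symm.trans (congrArg φ.symm hS.star_eq)
  · rw [star_trivial, dotProduct_comm, hquad]
    exact hSpos _ (by simpa using hx)
  · rw [hquad, hquad]
    exact hSf _
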